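/- arXiv:2302.03672 — 4 statements merged into one kernel-verified Lean document; each statement's English description precedes it below -/
import Mathlib

section
/- There exists an ABB instance for which no outcome satisfies both EJR-1 with respect to the cost-based satisfaction function μ^c and EJR-1 with respect to the cardinality-based satisfaction function μ^#. (Concretely: two voters, twelve projects p_1,…,p_12 with c(p_1) = c(p_2) = 5 and c(p_j) = 1 for j ≥ 3, approval ballots A_1 = {p_1,…,p_7} and A_2 = {p_1, p_2, p_8,…,p_12}, and budget b = 10, form such an instance.) -/
open Finset

namespace ABB

variable {V P : Type} [Fintype V] [DecidableEq V] [Fintype P] [DecidableEq P]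

/-- Total cost of a set of projects. -/
def costOf (c : P → ℝ) (S : Finset P) : ℝ := ∑ p ∈ S, c p

/-- `μ` is an (approval-based) satisfaction function: monotone w.r.t. inclusion,
nonnegative, and zero exactly on the empty set. -/
def IsSatFun (μ : Finset P → ℝ) : Prop :=
  (∀ S T : Finset P, S ⊆ T → μ S ≤ μ T) ∧
  (∀ S : Finset P, μ S = 0 ↔ S = ∅) ∧
  (∀ S : Finset P, 0 ≤ μ S)

/-- `μ` is strictly increasing. -/
def StrictlyIncreasing (μ : Finset P → ℝ) : Prop :=
  ∀ S T : Finset P, S ⊂ T → μ S < μ T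

/-- `μ` is cost-neutral: sets related by a cost-preserving bijection get equal satisfaction. -/
def CostNeutral (c : P → ℝ) (μ : Finset P → ℝ) : Prop :=
  ∀ S T : Finset P,
    (∃ f : {p // p ∈ S} → {p // p ∈ T},
        Function.Bijective f ∧ ∀ p : {p // p ∈ S}, c p.val = c (f p).val) →
    μ S = μ T

/-- `μ` is additive. -/
def Additive (μ : Finset P → ℝ) : Prop :=
  ∀ S : Finset P, μ S = ∑ p ∈ S, μ {p}

/-- `μ` is strictly cost-responsive. -/
def StrictlyCostResponsive (c : P → ℝ) (μ : Finset P → ℝ) : Prop :=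
  ∀ S T : Finset P, costOf c S < costOf c T → μ S < μ T

/-- The instance is a unit-cost instance. -/
def UnitCost (c : P → ℝ) : Prop := ∀ p : P, c p = 1

/-- `μ` has weakly decreasing normalized satisfaction (DNS): it is additive, and for
projects `p, p'` with `c p ≤ c p'` we have `μ {p} ≤ μ {p'}` and
`μ {p} / c p ≥ μ {p'} / c p'`. -/
def DNS (c : P → ℝ) (μ : Finset P → ℝ) : Prop :=
  Additive μ ∧
  ∀ p p' : P, c p ≤ c p' → μ {p} ≤ μ {p'} ∧ μ {p'} / c p' ≤ μ {p} / c p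

/-- A (nonempty) group `N'` of voters is `T`-cohesive. -/
def Cohesive (A : V → Finset P) (c : P → ℝ) (b : ℝ)
    (N' : Finset V) (T : Finset P) : Prop :=
  N'.Nonempty ∧ (∀ i ∈ N', T ⊆ A i) ∧
    costOf c T ≤ ((N'.card : ℝ) / (Fintype.card V : ℝ)) * b

/-- Extended justified representation w.r.t. `μ`. -/
def EJR (A : V → Finset P) (c : P → ℝ) (b : ℝ) (μ : Finset P → ℝ) (W : Finset P) : Prop :=
  ∀ (N' : Finset V) (T : Finset P), Cohesive A c b N' T →
    ∃ i ∈ N', μ T ≤ μ (A i ∩ W)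

/-- EJR up to one project w.r.t. `μ`. -/
def EJR1 (A : V → Finset P) (c : P → ℝ) (b : ℝ) (μ : Finset P → ℝ) (W : Finset P) : Prop :=
  ∀ (N' : Finset V) (T : Finset P), Cohesive A c b N' T →
    T ⊆ W ∨ ∃ i ∈ N', ∃ p ∉ W, μ T < μ (A i ∩ insert p W)

/-- EJR up to any project w.r.t. `μ`. -/
def EJRx (A : V → Finset P) (c : P → ℝ) (b : ℝ) (μ : Finset P → ℝ) (W : Finset P) : Prop :=
  ∀ (N' : Finset V) (T : Finset P), Cohesive A c b N' T →
    ∃ i ∈ N', ∀ p ∈ T \ W, μ T < μ (A i ∩ insert p W)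

/-- `μ`-EJR-1⁺: like EJR-1, but the additional project must come from `T`. -/
def EJR1plus (A : V → Finset P) (c : P → ℝ) (b : ℝ) (μ : Finset P → ℝ) (W : Finset P) : Prop :=
  ∀ (N' : Finset V) (T : Finset P), Cohesive A c b N' T →
    T ⊆ W ∨ ∃ i ∈ N', ∃ p ∈ T \ W, μ T < μ (A i ∩ insert p W)

/-- Proportional justified representation w.r.t. `μ`. -/
def PJR (A : V → Finset P) (c : P → ℝ) (b : ℝ) (μ : Finset P → ℝ) (W : Finset P) : Prop :=
  ∀ (N' : Finset V) (T : Finset P), Cohesive A c b N' T →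
    μ T ≤ μ (W ∩ N'.biUnion A)

/-- PJR up to any project w.r.t. `μ`. -/
def PJRx (A : V → Finset P) (c : P → ℝ) (b : ℝ) (μ : Finset P → ℝ) (W : Finset P) : Prop :=
  ∀ (N' : Finset V) (T : Finset P), Cohesive A c b N' T →
    ∀ p ∈ T \ W, μ T < μ (insert p (W ∩ N'.biUnion A))

/-- `μ`-Local-BPJR. -/
def LocalBPJR (A : V → Finset P) (c : P → ℝ) (b : ℝ) (μ : Finset P → ℝ) (W : Finset P) : Prop :=
  ¬ ∃ (N' : Finset V) (T Wstar : Finset P),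
      Cohesive A c b N' T ∧
      N'.biUnion A ∩ W ⊂ Wstar ∧
      (∀ i ∈ N', Wstar ⊆ A i) ∧
      costOf c Wstar ≤ costOf c T ∧
      (∀ W' : Finset P, (∀ i ∈ N', W' ⊆ A i) → costOf c W' ≤ costOf c T → μ W' ≤ μ Wstar)

/-- The set of approvers of a project. -/
def approvers (A : V → Finset P) (p : P) : Finset V :=
  Finset.univ.filter (fun i => p ∈ A i)

/-- `p` is `ρ`-affordable given per-voter remaining budgets `bud`. -/
def Affordable (A : V → Finset P) (c : P → ℝ) (μ : Finset P → ℝ)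
    (bud : V → ℝ) (p : P) (ρ : ℝ) : Prop :=
  ∑ i ∈ approvers A p, min (bud i) (ρ * μ {p}) = c p

/-- The states (selected set, remaining budgets) reachable by the Method of Equal Shares,
starting from initial per-voter budget `b0`. -/
inductive MESReach (A : V → Finset P) (c : P → ℝ) (μ : Finset P → ℝ) (b0 : ℝ) :
    Finset P → (V → ℝ) → Prop
  | init : MESReach A c μ b0 ∅ (fun _ => b0)
  | step {W : Finset P} {bud : V → ℝ} {p : P} {ρ : ℝ} :
      MESReach A c μ b0 W bud →
      p ∉ W → 0 ≤ ρ →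
      Affordable A c μ bud p ρ →
      (∀ p' ∉ W, ∀ ρ' : ℝ, 0 ≤ ρ' → Affordable A c μ bud p' ρ' → ρ ≤ ρ') →
      MESReach A c μ b0 (insert p W)
        (fun i => if p ∈ A i then bud i - min (bud i) (ρ * μ {p}) else bud i)

/-- `W` is an output of MES[μ]: it is reachable and no further project is affordable. -/
def MESOutput (A : V → Finset P) (c : P → ℝ) (b : ℝ) (μ : Finset P → ℝ) (W : Finset P) : Prop :=
  ∃ bud : V → ℝ,
    MESReach A c μ (b / (Fintype.card V : ℝ)) W bud ∧
    ∀ p ∉ W, ∀ ρ : ℝ, 0 ≤ ρ → ¬ Affordable A c μ bud p ρ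

/-- `(B, d)` is a price system for `W` (conditions C1–C5). -/
def PriceSystem (A : V → Finset P) (c : P → ℝ) (W : Finset P)
    (B : ℝ) (d : V → P → ℝ) : Prop :=
  0 < B ∧
  (∀ (i : V) (p : P), 0 ≤ d i p ∧ d i p ≤ B / (Fintype.card V : ℝ)) ∧
  (∀ (i : V) (p : P), 0 < d i p → p ∈ A i) ∧
  (∀ (i : V) (p : P), 0 < d i p → p ∈ W) ∧
  (∀ i : V, ∑ p : P, d i p ≤ B / (Fintype.card V : ℝ)) ∧
  (∀ p ∈ W, ∑ i : V, d i p = c p) ∧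
  (∀ p ∉ W, ∑ i ∈ approvers A p, (B / (Fintype.card V : ℝ) - ∑ p' : P, d i p') ≤ c p)

/-- Condition C6 for a payment function `d`. -/
def C6 (A : V → Finset P) (c : P → ℝ) (W : Finset P) (d : V → P → ℝ) : Prop :=
  ∀ p ∉ W, ∀ p' ∈ W, ∑ i ∈ approvers A p, d i p' ≤ c p

/-- Unselected projects with at least one approver. -/
def phragCandidates (A : V → Finset P) (W : Finset P) : Finset P :=
  Finset.univ.filter (fun p => p ∉ W ∧ (approvers A p).Nonempty)

/-- Sequential Phragmén's value `t(p)` given loads `l`. -/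
noncomputable def phragLoad (A : V → Finset P) (c : P → ℝ) (l : V → ℝ) (p : P) : ℝ :=
  (c p + ∑ i ∈ approvers A p, l i) / ((approvers A p).card : ℝ)

/-- The states (selected set, loads) reachable by sequential Phragmén. -/
inductive PhragReach (A : V → Finset P) (c : P → ℝ) (b : ℝ) :
    Finset P → (V → ℝ) → Prop
  | init : PhragReach A c b ∅ (fun _ => 0)
  | step {W : Finset P} {l : V → ℝ} {p : P} :
      PhragReach A c b W l →
      p ∈ phragCandidates A W →
      (∀ p' ∈ phragCandidates A W, phragLoad A c l p ≤ phragLoad A c l p') →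
      (∀ p' ∈ phragCandidates A W,
        (∀ p'' ∈ phragCandidates A W, phragLoad A c l p' ≤ phragLoad A c l p'') →
        costOf c W + c p' ≤ b) →
      PhragReach A c b (insert p W)
        (fun i => if p ∈ A i then phragLoad A c l p else l i)

/-- `W` is an output of sequential Phragmén: it is reachable and the rule terminates at `W`
(either no candidate is left, or some minimizer of `t` would exceed the budget). -/
def PhragOutput (A : V → Finset P) (c : P → ℝ) (b : ℝ) (W : Finset P) : Prop :=
  ∃ l : V → ℝ, PhragReach A c b W l ∧
    (phragCandidates A W = ∅ ∨
      ∃ p ∈ phragCandidates A W,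
        (∀ p' ∈ phragCandidates A W, phragLoad A c l p ≤ phragLoad A c l p') ∧
        b < costOf c W + c p)

end ABB

/-! Project `p_j` of the paper is `j - 1 : Fin 12`, so `expensive = {p₁, p₂}`.

Each voter alone is cohesive for the five unit-cost projects of their ballot, and since
cardinalities are integers, cardinality EJR-1 then puts five of each voter's projects into `W`.
The ballots share only `p₁, p₂`, so within budget 10 this forces `W` to avoid both. But the two
voters together are cohesive for `{p₁, p₂}` of cost 10, while a voter's cost satisfaction from
`W` plus one project is then at most `5 + 5`. -/

namespace ABB

section

variable {V P : Type} [Fintype V] [DecidableEq P]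

theorem costOf_inter_insert_le {c : P → ℝ} {p : P} (hp : 0 ≤ c p) (A W : Finset P) :
    costOf c (A ∩ insert p W) ≤ costOf c (A ∩ W) + c p := by
  rw [insert_inter]
  split_ifs
  · unfold costOf
    by_cases hpW : p ∈ A ∩ W
    · rw [insert_eq_of_mem hpW]
      linarith
    · rw [sum_insert hpW, add_comm]
  · linarith

theorem card_inter_insert_le (p : P) (A W : Finset P) :
    (A ∩ insert p W).card ≤ (A ∩ W).card + 1 := by
  rw [insert_inter]
  split_ifs
  exacts [card_insert_le _ _, Nat.le_succ _]

theorem EJR1.ejr_card {A : V → Finset P} {c : P → ℝ} {b : ℝ} {W : Finset P}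
    (h : EJR1 A c b (fun S => (S.card : ℝ)) W) : EJR A c b (fun S => (S.card : ℝ)) W := by
  intro N' T hT
  obtain ⟨i, hi⟩ := hT.1
  rcases h N' T hT with hTW | ⟨j, hj, p, -, hlt⟩
  · exact ⟨i, hi, Nat.cast_le.2 <| card_le_card (subset_inter (hT.2.1 i hi) hTW)⟩
  · have hlt' : T.card < (A j ∩ insert p W).card := Nat.cast_lt.1 hlt
    have := card_inter_insert_le p (A j) W
    exact ⟨j, hj, Nat.cast_le.2 (by omega)⟩

end

end ABB

namespace ABB.CostVsCardinality

def expensive : Finset (Fin 12) := {0, 1}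

def ballot : Fin 2 → Finset (Fin 12) := ![{0, 1, 2, 3, 4, 5, 6}, {0, 1, 7, 8, 9, 10, 11}]

def cost (p : Fin 12) : ℝ := if p ∈ expensive then 5 else 1

theorem cost_pos (p : Fin 12) : 0 < cost p := by
  unfold cost
  split_ifs <;> norm_num

theorem cost_le_five (p : Fin 12) : cost p ≤ 5 := by
  unfold cost
  split_ifs <;> norm_num

theorem costOf_cost (S : Finset (Fin 12)) :
    costOf cost S = S.card + 4 * (S ∩ expensive).card := by
  have hsplit (p : Fin 12) : cost p = 1 + if p ∈ expensive then 4 else 0 := by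
    unfold cost
    split_ifs <;> norm_num
  simp only [costOf, hsplit, sum_add_distrib, sum_ite_mem, sum_const, nsmul_eq_mul]
  ring

theorem costOf_expensive : costOf cost expensive = 10 := by
  rw [costOf_cost, inter_self, show expensive.card = 2 from rfl]
  norm_num

theorem ballot_zero_inter_ballot_one : ballot 0 ∩ ballot 1 = expensive := by decide

theorem ballot_zero_union_ballot_one : ballot 0 ∪ ballot 1 = univ := by decide

theorem expensive_subset_ballot (i : Fin 2) : expensive ⊆ ballot i := by
  fin_cases i <;> decide

theorem card_ballot_sdiff_expensive (i : Fin 2) : (ballot i \ expensive).card = 5 := by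
  fin_cases i <;> decide

theorem cohesive_univ_expensive : Cohesive ballot cost 10 univ expensive := by
  refine ⟨univ_nonempty, fun i _ => expensive_subset_ballot i, ?_⟩
  rw [costOf_expensive, card_univ]
  norm_num

theorem cohesive_singleton_ballot_sdiff_expensive (i : Fin 2) :
    Cohesive ballot cost 10 {i} (ballot i \ expensive) := by
  refine ⟨singleton_nonempty i, fun j hj => (mem_singleton.1 hj) ▸ sdiff_subset, ?_⟩
  rw [costOf_cost, sdiff_inter_self, card_ballot_sdiff_expensive, card_singleton]
  norm_num

theorem five_le_card_ballot_inter {W : Finset (Fin 12)}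
    (h : EJR1 ballot cost 10 (fun S => (S.card : ℝ)) W) (i : Fin 2) :
    5 ≤ (ballot i ∩ W).card := by
  obtain ⟨j, hj, hle⟩ := h.ejr_card {i} _ (cohesive_singleton_ballot_sdiff_expensive i)
  rw [mem_singleton.1 hj] at hle
  exact card_ballot_sdiff_expensive i ▸ Nat.cast_le.1 hle

/-- The two ballots overlap only in `expensive`, so five of each cost at least `10 + 3 k`
where `k` expensive projects are bought. -/
theorem disjoint_expensive {W : Finset (Fin 12)} (hW : costOf cost W ≤ 10)
    (h5 : ∀ i, 5 ≤ (ballot i ∩ W).card) : Disjoint W expensive := by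
  have hcount := card_inter_add_card_union (ballot 0 ∩ W) (ballot 1 ∩ W)
  rw [inter_inter_inter_comm, inter_self, ballot_zero_inter_ballot_one,
    ← union_inter_distrib_right, ballot_zero_union_ballot_one, univ_inter, inter_comm] at hcount
  have hW' : W.card + 4 * (W ∩ expensive).card ≤ 10 := by
    rw [costOf_cost] at hW
    exact_mod_cast hW
  rw [disjoint_iff_inter_eq_empty, ← card_eq_zero]
  have := h5 0
  have := h5 1
  omega

theorem costOf_ballot_inter_insert_le {W : Finset (Fin 12)} (hW : Disjoint W expensive)
    (i : Fin 2) (p : Fin 12) : costOf cost (ballot i ∩ insert p W) ≤ 10 := by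
  have hcheap : ballot i ∩ W ⊆ ballot i \ expensive := fun q hq =>
    mem_sdiff.2 ⟨(mem_inter.1 hq).1, disjoint_left.1 hW (mem_inter.1 hq).2⟩
  have hcard : costOf cost (ballot i ∩ W) ≤ 5 := by
    rw [costOf_cost, disjoint_iff_inter_eq_empty.1 (hW.mono_left inter_subset_right),
      card_empty, Nat.cast_zero, mul_zero, add_zero]
    exact_mod_cast card_ballot_sdiff_expensive i ▸ card_le_card hcheap
  calc costOf cost (ballot i ∩ insert p W) ≤ costOf cost (ballot i ∩ W) + cost p :=
        costOf_inter_insert_le (cost_pos p).le _ _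
    _ ≤ 5 + 5 := add_le_add hcard (cost_le_five p)
    _ = 10 := by norm_num

end ABB.CostVsCardinality

open ABB.CostVsCardinality

/-- There exists an ABB instance for which no outcome satisfies both
EJR-1 w.r.t. the cost-based satisfaction function `μ^c` and EJR-1 w.r.t. the
cardinality-based satisfaction function `μ^#`. -/
theorem statement7 :
    ∃ (n m : ℕ) (A : Fin n → Finset (Fin m)) (c : Fin m → ℝ) (b : ℝ),
      (∀ p : Fin m, 0 < c p) ∧ 0 < b ∧ 0 < n ∧
      ∀ W : Finset (Fin m), ABB.costOf c W ≤ b →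
        ¬ (ABB.EJR1 A c b (ABB.costOf c) W ∧
           ABB.EJR1 A c b (fun S => (S.card : ℝ)) W) := by
  refine ⟨2, 12, ballot, cost, 10, cost_pos, by norm_num, by norm_num, ?_⟩
  rintro W hW ⟨hcost, hcard⟩
  have hdisj := disjoint_expensive hW (five_le_card_ballot_inter hcard)
  rcases hcost univ expensive cohesive_univ_expensive with hsub | ⟨i, -, p, -, hlt⟩
  · have h0 : (0 : Fin 12) ∈ expensive := by decide
    exact disjoint_left.1 hdisj (hsub h0) h0
  · rw [costOf_expensive] at hlt
    exact (costOf_ballot_inter_insert_le hdisj i p).not_gt hlt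
end

section
/- For every ABB instance and every satisfaction function μ, there exists an outcome W (i.e., a set W ⊆ P with c(W) ≤ b) that satisfies PJR with respect to μ. -/
open Finset

/-!
Greedy cohesive rule: among the voters not yet removed, pick a cohesive group `S` whose set
`T` has maximal satisfaction, fund `T`, remove `S`, and repeat until no cohesive group is left.
Funding `T` costs at most `|S| / n * b`, so the total cost is at most `b`. A cohesive group `N'`
with set `T'` cannot survive to the end, so it meets some removed group `S`; when `S` was chosen
`N'` was still a candidate, so `T'` is worth at most the chosen `T`, which every member of `S`
approves. This yields EJR, which implies PJR.
-/

namespace ABB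

lemma costOf_union_le {P : Type} [DecidableEq P] {c : P → ℝ} (hc : ∀ p, 0 ≤ c p)
    (S T : Finset P) :
    costOf c (S ∪ T) ≤ costOf c S + costOf c T := by
  have := sum_union_inter (s₁ := S) (s₂ := T) (f := c)
  have := sum_nonneg fun p (_ : p ∈ S ∩ T) => hc p
  unfold costOf
  linarith

lemma EJR.pjr {V P : Type} [Fintype V] [DecidableEq P] {A : V → Finset P} {c : P → ℝ}
    {b : ℝ} {μ : Finset P → ℝ} {W : Finset P} (hμ : Monotone μ) (h : EJR A c b μ W) :
    PJR A c b μ W := by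
  intro N' T hcoh
  obtain ⟨i, hi, hle⟩ := h N' T hcoh
  refine hle.trans (hμ fun p hp => ?_)
  rw [mem_inter] at hp ⊢
  exact ⟨hp.2, mem_biUnion.mpr ⟨i, hi, hp.1⟩⟩

lemma exists_costOf_le_and_ejr_within {V P : Type} [Fintype V] [DecidableEq V] [Fintype P]
    [DecidableEq P] (A : V → Finset P) {c : P → ℝ} {b : ℝ} {μ : Finset P → ℝ}
    (hc : ∀ p, 0 ≤ c p) (hb : 0 ≤ b) (hμ : Monotone μ) (act : Finset V) :
    ∃ W : Finset P, costOf c W ≤ (act.card / Fintype.card V : ℝ) * b ∧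
      ∀ N' T, Cohesive A c b N' T → N' ⊆ act → ∃ i ∈ N', μ T ≤ μ (A i ∩ W) := by
  induction act using Finset.strongInduction with
  | H act ih =>
  set candidates : Set (Finset V × Finset P) := {q | q.1 ⊆ act ∧ Cohesive A c b q.1 q.2}
  rcases candidates.eq_empty_or_nonempty with hnone | hsome
  · refine ⟨∅, by simp only [costOf, sum_empty]; positivity, fun N' T hcoh hN' => ?_⟩
    exact (Set.eq_empty_iff_forall_notMem.mp hnone (N', T) ⟨hN', hcoh⟩).elim
  obtain ⟨⟨S, T⟩, ⟨hSact, hST⟩, hmax⟩ :=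
    Set.exists_max_image candidates (fun q => μ q.2) (Set.toFinite _) hsome
  obtain ⟨W, hW, hrep⟩ := ih (act \ S) (sdiff_ssubset hSact hST.1)
  refine ⟨T ∪ W, ?_, fun N' T' hcoh hN' => ?_⟩
  · have hcard : ((act \ S).card : ℝ) + S.card = act.card := by
      exact_mod_cast card_sdiff_add_card_eq_card hSact
    calc costOf c (T ∪ W) ≤ costOf c T + costOf c W := costOf_union_le hc T W
      _ ≤ (S.card / Fintype.card V : ℝ) * b + ((act \ S).card / Fintype.card V : ℝ) * b :=
          add_le_add hST.2.2 hW
      _ = (act.card / Fintype.card V : ℝ) * b := by rw [← hcard]; ring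
  by_cases hN'S : N' ⊆ act \ S
  · obtain ⟨i, hi, hle⟩ := hrep N' T' hcoh hN'S
    exact ⟨i, hi, hle.trans (hμ (inter_subset_inter_left subset_union_right))⟩
  · obtain ⟨i, hiN', hiS⟩ : ∃ i ∈ N', i ∈ S := by
      obtain ⟨i, hiN', hi⟩ := not_subset.mp hN'S
      exact ⟨i, hiN', by simpa [hN' hiN'] using hi⟩
    refine ⟨i, hiN', (hmax (N', T') ⟨hN', hcoh⟩).trans (hμ fun p hp => ?_)⟩
    exact mem_inter.mpr ⟨hST.2.1 i hiS hp, mem_union_left W hp⟩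

lemma exists_costOf_le_and_ejr {V P : Type} [Fintype V] [DecidableEq V] [Fintype P]
    [DecidableEq P] (A : V → Finset P) {c : P → ℝ} {b : ℝ} {μ : Finset P → ℝ}
    (hn : 0 < Fintype.card V) (hc : ∀ p, 0 ≤ c p) (hb : 0 ≤ b) (hμ : Monotone μ) :
    ∃ W : Finset P, costOf c W ≤ b ∧ EJR A c b μ W := by
  obtain ⟨W, hcost, hrep⟩ := exists_costOf_le_and_ejr_within A hc hb hμ univ
  refine ⟨W, ?_, fun N' T hcoh => hrep N' T hcoh (subset_univ N')⟩
  rwa [card_univ, div_self (by positivity), one_mul] at hcost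

end ABB

/-- For every ABB instance and satisfaction function `μ`, there is an
outcome satisfying PJR w.r.t. `μ`. -/
theorem statement8 {V P : Type} [Fintype V] [DecidableEq V] [Fintype P] [DecidableEq P]
    (A : V → Finset P) (c : P → ℝ) (b : ℝ)
    (hn : 0 < Fintype.card V) (hc : ∀ p : P, 0 < c p) (hb : 0 < b)
    (μ : Finset P → ℝ) (hμ : ABB.IsSatFun μ) :
    ∃ W : Finset P, ABB.costOf c W ≤ b ∧ ABB.PJR A c b μ W := by
  have hμ_mono : Monotone μ := fun S T hST => hμ.1 S T hST
  obtain ⟨W, hcost, hejr⟩ :=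
    ABB.exists_costOf_le_and_ejr A hn (fun p => (hc p).le) hb.le hμ_mono
  exact ⟨W, hcost, hejr.pjr hμ_mono⟩
end

section
/- Consider a unit-cost ABB instance and a satisfaction function μ that is cost-neutral and strictly increasing. Then an outcome W satisfies PJR-x with respect to μ if and only if it satisfies PJR with respect to μ. -/
open Finset

/-!
With unit costs, cost neutrality makes `μ S` a monotone function of `#S` alone. If PJR failed
for a `T`-cohesive group `N'`, then `X := W ∩ ⋃_{i ∈ N'} A i` would have fewer elements than `T`;
some `p ∈ T` then lies outside `X`, hence outside `W`, and `insert p X` is no larger than `T`,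
contradicting PJR-x. Conversely PJR implies PJR-x as soon as `μ` is strictly increasing.
-/

namespace ABB

variable {V P : Type} {μ : Finset P → ℝ} {c : P → ℝ}

theorem StrictlyIncreasing.monotone (hsi : StrictlyIncreasing μ) {S T : Finset P}
    (hST : S ⊆ T) : μ S ≤ μ T := by
  rcases hST.eq_or_ssubset with rfl | hlt
  · exact le_rfl
  · exact (hsi S T hlt).le

theorem CostNeutral.eq_of_card_eq (hunit : UnitCost c) (hcn : CostNeutral c μ)
    {S T : Finset P} (hST : #S = #T) : μ S = μ T :=
  hcn S T ⟨equivOfCardEq hST, (equivOfCardEq hST).bijective,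
    fun p => by rw [hunit, hunit]⟩

theorem CostNeutral.le_of_card_le (hunit : UnitCost c) (hcn : CostNeutral c μ)
    (hsi : StrictlyIncreasing μ) {S T : Finset P} (hST : #S ≤ #T) : μ S ≤ μ T := by
  obtain ⟨T', hT'T, hcard⟩ := exists_subset_card_eq hST
  rw [hcn.eq_of_card_eq hunit hcard.symm]
  exact hsi.monotone hT'T

variable [Fintype V] [DecidableEq P] {A : V → Finset P} {b : ℝ} {W : Finset P}

theorem PJRx_of_PJR (hsi : StrictlyIncreasing μ) (h : PJR A c b μ W) : PJRx A c b μ W := by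
  intro N' T hcoh p hp
  have hpX : p ∉ W ∩ N'.biUnion A := fun hmem => (mem_sdiff.1 hp).2 (mem_inter.1 hmem).1
  exact (h N' T hcoh).trans_lt (hsi _ _ (ssubset_insert hpX))

theorem PJR_of_PJRx (hunit : UnitCost c) (hcn : CostNeutral c μ) (hsi : StrictlyIncreasing μ)
    (h : PJRx A c b μ W) : PJR A c b μ W := by
  intro N' T hcoh
  set X := W ∩ N'.biUnion A
  by_contra! hXT
  have hcardX : #X < #T := by
    by_contra! hTX
    exact (hcn.le_of_card_le hunit hsi hTX).not_gt hXT
  obtain ⟨p, hpT, hpX⟩ := exists_mem_notMem_of_card_lt_card hcardX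
  obtain ⟨i, hi⟩ := hcoh.1
  have hpW : p ∉ W := fun hpW =>
    hpX (mem_inter.2 ⟨hpW, mem_biUnion.2 ⟨i, hi, hcoh.2.1 i hi hpT⟩⟩)
  have hcard : #(insert p X) ≤ #T := (card_insert_le p X).trans hcardX
  exact (h N' T hcoh p (mem_sdiff.2 ⟨hpT, hpW⟩)).not_ge (hcn.le_of_card_le hunit hsi hcard)

end ABB

theorem statement10_general {V P : Type} [Fintype V] [DecidableEq P]
    (A : V → Finset P) (c : P → ℝ) (b : ℝ)
    (hunit : ABB.UnitCost c)
    (μ : Finset P → ℝ)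
    (hcn : ABB.CostNeutral c μ) (hsi : ABB.StrictlyIncreasing μ)
    (W : Finset P) :
    ABB.PJRx A c b μ W ↔ ABB.PJR A c b μ W :=
  ⟨ABB.PJR_of_PJRx hunit hcn hsi, ABB.PJRx_of_PJR hsi⟩

/-- In a unit-cost ABB instance, for a cost-neutral and strictly
increasing satisfaction function `μ`, an outcome satisfies PJR-x w.r.t. `μ` iff it
satisfies PJR w.r.t. `μ`. -/
theorem statement10 {V P : Type} [Fintype V] [DecidableEq V] [Fintype P] [DecidableEq P]
    (A : V → Finset P) (c : P → ℝ) (b : ℝ)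
    (hn : 0 < Fintype.card V) (hc : ∀ p : P, 0 < c p) (hb : 0 < b)
    (hunit : ABB.UnitCost c)
    (μ : Finset P → ℝ) (hμ : ABB.IsSatFun μ)
    (hcn : ABB.CostNeutral c μ) (hsi : ABB.StrictlyIncreasing μ)
    (W : Finset P) (hW : ABB.costOf c W ≤ b) :
    ABB.PJRx A c b μ W ↔ ABB.PJR A c b μ W :=
  statement10_general A c b hunit μ hcn hsi W
end

section
/- Let W be an outcome of an ABB instance that admits a price system (B, d) satisfying condition C6 and with B > b. Then W satisfies PJR-x with respect to every DNS satisfaction function μ. -/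
open Finset

/-! A `T`-cohesive group `N'` is entitled to `|N'| b / n`, but under the price system it holds
`|N'| B / n > c(T)`; since its leftover money cannot buy `p₀ ∈ T \ W` (C5), it must already have
paid more than `c(T) - c(p₀)` for projects in `W`. Outside `T`, C6 caps every such payment by the
cost of the cheapest project `q₀ ∈ T \ W`, and DNS then makes every unit paid worth at least the
satisfaction rate `μ(q₀) / c(q₀)`, which in turn bounds the rate of every project of `T \ W`.
Hence the satisfaction bought outside `T` exceeds that of `T \ W` minus `p₀`. -/

namespace ABB

section Sums

variable {P : Type} [DecidableEq P] {S T : Finset P} {p : P}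

theorem sum_eq_add_sum_inter_add_sum_erase_sdiff (f : P → ℝ) (hp : p ∈ T \ S) :
    ∑ q ∈ T, f q = f p + ∑ q ∈ T ∩ S, f q + ∑ q ∈ (T \ S).erase p, f q := by
  rw [← sum_inter_add_sum_sdiff T S f, ← add_sum_erase _ f hp]
  ring

theorem sum_erase_sdiff_lt_of_sum_sub_lt {f g : P → ℝ} (hp : p ∈ T \ S)
    (hgf : ∀ q ∈ T ∩ S, g q ≤ f q) (h : ∑ q ∈ T, f q - f p < ∑ q ∈ S, g q) :
    ∑ q ∈ (T \ S).erase p, f q < ∑ q ∈ S \ T, g q := by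
  rw [sum_eq_add_sum_inter_add_sum_erase_sdiff f hp, ← sum_inter_add_sum_sdiff S T g,
    inter_comm S T] at h
  linarith [sum_le_sum hgf]

theorem sum_lt_add_sum_of_sum_erase_sdiff_lt {f : P → ℝ} (hp : p ∈ T \ S)
    (h : ∑ q ∈ (T \ S).erase p, f q < ∑ q ∈ S \ T, f q) :
    ∑ q ∈ T, f q < f p + ∑ q ∈ S, f q := by
  rw [sum_eq_add_sum_inter_add_sum_erase_sdiff f hp, ← sum_inter_add_sum_sdiff S T f,
    inter_comm S T]
  linarith

end Sums

section Satisfaction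

variable {P : Type} {c : P → ℝ} {μ : Finset P → ℝ}

theorem IsSatFun.singleton_pos (hμ : IsSatFun μ) (p : P) : 0 < μ {p} :=
  (hμ.2.2 {p}).lt_of_ne' fun h => singleton_ne_empty p ((hμ.2.1 {p}).1 h)

namespace DNS

variable (hμ : DNS c μ) (hc : ∀ p, 0 < c p)
include hμ hc

theorem singleton_le_mul_div {q q₀ : P} (hle : c q₀ ≤ c q) :
    μ {q} ≤ c q * (μ {q₀} / c q₀) :=
  calc μ {q} = c q * (μ {q} / c q) := (mul_div_cancel₀ _ (hc q).ne').symm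
    _ ≤ c q * (μ {q₀} / c q₀) := mul_le_mul_of_nonneg_left (hμ.2 q₀ q hle).2 (hc q).le

theorem mul_div_le_singleton {p q₀ : P} (hμq₀ : 0 ≤ μ {q₀}) {y : ℝ}
    (hyp : y ≤ c p) (hyq : y ≤ c q₀) : y * (μ {q₀} / c q₀) ≤ μ {p} := by
  rcases le_total (c p) (c q₀) with h | h
  · calc y * (μ {q₀} / c q₀) ≤ c p * (μ {p} / c p) :=
          mul_le_mul hyp (hμ.2 p q₀ h).2 (div_nonneg hμq₀ (hc q₀).le) (hc p).le
      _ = μ {p} := mul_div_cancel₀ _ (hc p).ne'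
  · calc y * (μ {q₀} / c q₀) ≤ c q₀ * (μ {q₀} / c q₀) :=
          mul_le_mul_of_nonneg_right hyq (div_nonneg hμq₀ (hc q₀).le)
      _ = μ {q₀} := mul_div_cancel₀ _ (hc q₀).ne'
      _ ≤ μ {p} := (hμ.2 q₀ p h).1

theorem sum_singleton_lt_of_sum_cost_lt (hμ₀ : ∀ p, 0 < μ {p}) {U R : Finset P} {q₀ : P}
    {x : P → ℝ} (hU : ∀ q ∈ U, c q₀ ≤ c q)
    (hxc : ∀ p ∈ R, x p ≤ c p) (hxq : ∀ p ∈ R, x p ≤ c q₀)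
    (hlt : ∑ q ∈ U, c q < ∑ p ∈ R, x p) : ∑ q ∈ U, μ {q} < ∑ p ∈ R, μ {p} := by
  have hr : 0 < μ {q₀} / c q₀ := div_pos (hμ₀ q₀) (hc q₀)
  calc ∑ q ∈ U, μ {q} ≤ ∑ q ∈ U, c q * (μ {q₀} / c q₀) :=
        sum_le_sum fun q hq => hμ.singleton_le_mul_div hc (hU q hq)
    _ = (∑ q ∈ U, c q) * (μ {q₀} / c q₀) := (sum_mul ..).symm
    _ < (∑ p ∈ R, x p) * (μ {q₀} / c q₀) := mul_lt_mul_of_pos_right hlt hr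
    _ = ∑ p ∈ R, x p * (μ {q₀} / c q₀) := sum_mul ..
    _ ≤ ∑ p ∈ R, μ {p} := sum_le_sum fun p hp =>
        hμ.mul_div_le_singleton hc (hμ₀ q₀).le (hxc p hp) (hxq p hp)

end DNS

end Satisfaction

namespace Cohesive

variable {V P : Type} [Fintype V] [DecidableEq P] {A : V → Finset P} {c : P → ℝ} {b : ℝ}
  {N' : Finset V} {T W : Finset P} (hT : Cohesive A c b N' T)
include hT

theorem subset_approvers {q : P} (hq : q ∈ T) : N' ⊆ approvers A q :=
  fun i hi => mem_filter.2 ⟨mem_univ i, hT.2.1 i hi hq⟩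

theorem sdiff_inter_biUnion : T \ (W ∩ N'.biUnion A) = T \ W := by
  obtain ⟨i, hi⟩ := hT.1
  ext q
  simp only [mem_sdiff, mem_inter, mem_biUnion, not_and]
  exact ⟨fun h => ⟨h.1, fun hq => h.2 hq ⟨i, hi, hT.2.1 i hi h.1⟩⟩,
    fun h => ⟨h.1, fun hq _ => h.2 hq⟩⟩

end Cohesive

section PriceSystem

variable {V P : Type} [Fintype V] [Fintype P] [DecidableEq P] {A : V → Finset P} {c : P → ℝ}
  {W : Finset P} {B : ℝ} {d : V → P → ℝ} {N' : Finset V}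

namespace PriceSystem

variable (hps : PriceSystem A c W B d)
include hps

theorem sum_payments_le_cost {p : P} (hp : p ∈ W) : ∑ i ∈ N', d i p ≤ c p :=
  hps.2.2.2.2.2.1 p hp ▸
    sum_le_sum_of_subset_of_nonneg (subset_univ N') fun i _ _ => (hps.2.1 i p).1

theorem sum_payments_eq_zero {p : P} (hp : p ∉ W ∩ N'.biUnion A) : ∑ i ∈ N', d i p = 0 :=
  sum_eq_zero fun i hi => by
    by_contra h
    have hpos : 0 < d i p := (hps.2.1 i p).1.lt_of_ne' h
    exact hp (mem_inter.2 ⟨hps.2.2.2.1 i p hpos, mem_biUnion.2 ⟨i, hi, hps.2.2.1 i p hpos⟩⟩)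

theorem card_mul_sub_cost_le {p : P} (hp : p ∉ W) (hN' : N' ⊆ approvers A p) :
    N'.card * (B / Fintype.card V) - c p ≤ ∑ q ∈ W ∩ N'.biUnion A, ∑ i ∈ N', d i q := by
  have hunspent : ∑ i ∈ N', (B / Fintype.card V - ∑ q, d i q) ≤ c p :=
    (sum_le_sum_of_subset_of_nonneg hN' fun i _ _ => sub_nonneg.2 (hps.2.2.2.2.1 i)).trans
      (hps.2.2.2.2.2.2 p hp)
  have hpaid : ∑ i ∈ N', ∑ q, d i q = ∑ q ∈ W ∩ N'.biUnion A, ∑ i ∈ N', d i q := by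
    rw [sum_comm]
    exact (sum_subset (subset_univ _) fun q _ hq => hps.sum_payments_eq_zero hq).symm
  rw [sum_sub_distrib, sum_const, nsmul_eq_mul, hpaid] at hunspent
  linarith

end PriceSystem

theorem C6.sum_payments_le_cost (hC6 : C6 A c W d) (hps : PriceSystem A c W B d) {p q : P}
    (hq : q ∉ W) (hN' : N' ⊆ approvers A q) (hp : p ∈ W) : ∑ i ∈ N', d i p ≤ c q :=
  (sum_le_sum_of_subset_of_nonneg hN' fun i _ _ => (hps.2.1 i p).1).trans (hC6 q hq p hp)

namespace Cohesive

variable {b : ℝ} {T : Finset P} (hT : Cohesive A c b N' T)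
include hT

theorem sum_cost_sub_lt_sum_payments (hps : PriceSystem A c W B d) (hbB : b < B) {p : P}
    (hp : p ∈ T \ W) :
    ∑ q ∈ T, c q - c p < ∑ q ∈ W ∩ N'.biUnion A, ∑ i ∈ N', d i q := by
  have hn : (0 : ℝ) < Fintype.card V := by
    exact_mod_cast Fintype.card_pos_iff.2 ⟨hT.1.choose⟩
  have hN' : (0 : ℝ) < N'.card := by exact_mod_cast hT.1.card_pos
  have hentitled : (N'.card / Fintype.card V : ℝ) * b < N'.card * (B / Fintype.card V) := by
    rw [div_mul_eq_mul_div, mul_div_assoc]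
    exact mul_lt_mul_of_pos_left ((div_lt_div_iff_of_pos_right hn).2 hbB) hN'
  have hcost : ∑ q ∈ T, c q ≤ (N'.card / Fintype.card V : ℝ) * b := hT.2.2
  have hunbought :=
    hps.card_mul_sub_cost_le (mem_sdiff.1 hp).2 (hT.subset_approvers (mem_sdiff.1 hp).1)
  linarith

end Cohesive

end PriceSystem

end ABB

theorem statement12_general {V P : Type} [Fintype V] [Fintype P] [DecidableEq P]
    (A : V → Finset P) (c : P → ℝ) (b : ℝ)
    (hc : ∀ p : P, 0 < c p)
    (W : Finset P)
    (B : ℝ) (d : V → P → ℝ)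
    (hps : ABB.PriceSystem A c W B d) (hC6 : ABB.C6 A c W d) (hBb : b < B) :
    ∀ μ : Finset P → ℝ, ABB.IsSatFun μ → ABB.DNS c μ → ABB.PJRx A c b μ W := by
  intro μ hsat hdns N' T hT p₀ hp₀
  set S := W ∩ N'.biUnion A
  have hTS : T \ S = T \ W := hT.sdiff_inter_biUnion
  have hp₀S : p₀ ∈ T \ S := hTS ▸ hp₀
  obtain ⟨q₀, hq₀, hq₀_min⟩ := (T \ W).exists_min_image c ⟨p₀, hp₀⟩
  have hpaid : ∑ q ∈ (T \ S).erase p₀, c q < ∑ p ∈ S \ T, ∑ i ∈ N', d i p :=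
    ABB.sum_erase_sdiff_lt_of_sum_sub_lt hp₀S
      (fun p hp => hps.sum_payments_le_cost (mem_inter.1 (mem_inter.1 hp).2).1)
      (hT.sum_cost_sub_lt_sum_payments hps hBb hp₀)
  have hgain : ∑ q ∈ (T \ S).erase p₀, μ {q} < ∑ p ∈ S \ T, μ {p} :=
    hdns.sum_singleton_lt_of_sum_cost_lt hc hsat.singleton_pos
      (fun q hq => hq₀_min q (hTS ▸ mem_of_mem_erase hq))
      (fun p hp => hps.sum_payments_le_cost (mem_inter.1 (mem_sdiff.1 hp).1).1)
      (fun p hp => hC6.sum_payments_le_cost hps (mem_sdiff.1 hq₀).2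
        (hT.subset_approvers (mem_sdiff.1 hq₀).1) (mem_inter.1 (mem_sdiff.1 hp).1).1)
      hpaid
  rw [hdns.1 T, hdns.1, sum_insert (mem_sdiff.1 hp₀S).2]
  exact ABB.sum_lt_add_sum_of_sum_erase_sdiff_lt hp₀S hgain

/-- If an outcome `W` admits a price system `(B, d)` satisfying C6 and
with `B > b`, then `W` satisfies PJR-x w.r.t. every DNS satisfaction function `μ`. -/
theorem statement12 {V P : Type} [Fintype V] [DecidableEq V] [Fintype P] [DecidableEq P]
    (A : V → Finset P) (c : P → ℝ) (b : ℝ)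
    (hn : 0 < Fintype.card V) (hc : ∀ p : P, 0 < c p) (hb : 0 < b)
    (W : Finset P) (hW : ABB.costOf c W ≤ b)
    (B : ℝ) (d : V → P → ℝ)
    (hps : ABB.PriceSystem A c W B d) (hC6 : ABB.C6 A c W d) (hBb : b < B) :
    ∀ μ : Finset P → ℝ, ABB.IsSatFun μ → ABB.DNS c μ → ABB.PJRx A c b μ W :=
  statement12_general A c b hc W B d hps hC6 hBb
end
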